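/- arXiv:1912.11754 — 2 statements merged into one kernel-verified Lean document; each statement's English description precedes it below -/
import Mathlib

section
/- Let K be a field of characteristic 2, let A and B be n×n circulant matrices over K, and let C be an n×n reverse-circulant matrix over K. Assume that A·Aᵀ + B·Bᵀ + C² = I_n and that A·C = C·A. Let M be the 2n×2n block matrix [[A, B + C], [Bᵀ + C, Aᵀ]]. Then the linear code generated by the block matrix (I_{2n} | M), i.e. the subspace {(x, Mᵀx) : x ∈ K^{2n}} of K^{4n}, is self-dual. -/
open Matrix

/-- A matrix is circulant if `A i j` depends only on `j - i` computed in `ZMod n`. -/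
def IsCirculant {R : Type*} [CommRing R] {n : ℕ} (A : Matrix (Fin n) (Fin n) R) : Prop :=
  ∃ a : ZMod n → R, ∀ i j : Fin n, A i j = a (((j : ℕ) : ZMod n) - ((i : ℕ) : ZMod n))

/-- A matrix is reverse-circulant if `A i j` depends only on `i + j` computed in `ZMod n`. -/
def IsRevCirculant {R : Type*} [CommRing R] {n : ℕ} (A : Matrix (Fin n) (Fin n) R) : Prop :=
  ∃ c : ZMod n → R, ∀ i j : Fin n, A i j = c (((i : ℕ) : ZMod n) + ((j : ℕ) : ZMod n))

/-- A matrix is `λ`-circulant if each row is the `λ`-cyclic shift of the previous one: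
`A i j = a (j - i)` when `i ≤ j` and `A i j = λ * a (n + j - i)` when `i > j`. -/
def IsLamCirculant {R : Type*} [CommRing R] {n : ℕ} (lam : R)
    (A : Matrix (Fin n) (Fin n) R) : Prop :=
  ∃ a : ℕ → R, ∀ i j : Fin n,
    A i j = if (i : ℕ) ≤ (j : ℕ) then a ((j : ℕ) - (i : ℕ))
      else lam * a (n + (j : ℕ) - (i : ℕ))

/-- The back-diagonal (exchange) matrix: `J i j = 1` iff `i + j = n - 1`. -/
def exchMatrix (R : Type*) [CommRing R] (n : ℕ) : Matrix (Fin n) (Fin n) R :=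
  Matrix.of fun i j => if (i : ℕ) + (j : ℕ) = n - 1 then 1 else 0

/-- The dual of a code (submodule of `ι → K`) w.r.t. the Euclidean inner product. -/
def dualCode {K : Type*} [CommRing K] {ι : Type*} [Fintype ι]
    (C : Submodule K (ι → K)) : Submodule K (ι → K) where
  carrier := {x | ∀ y ∈ C, ∑ i, x i * y i = 0}
  zero_mem' := by intro y _; simp
  add_mem' := by
    intro a b ha hb y hy
    simp only [Set.mem_setOf_eq] at ha hb ⊢
    simp [Pi.add_apply, add_mul, Finset.sum_add_distrib, ha y hy, hb y hy]
  smul_mem' := by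
    intro c a ha y hy
    simp only [Set.mem_setOf_eq] at ha ⊢
    simp [Pi.smul_apply, smul_eq_mul, mul_assoc, ← Finset.mul_sum, ha y hy]

/-- The code generated by the block matrix `(I | M)`: the row space
`{(x, Mᵀx) : x ∈ K^ι}` inside `K^(ι ⊕ ι)`. -/
def genCode {K : Type*} [CommRing K] {ι : Type*} [Fintype ι]
    (M : Matrix ι ι K) : Submodule K (ι ⊕ ι → K) where
  carrier := {v | ∃ x : ι → K, v = Sum.elim x (Matrix.mulVec (Matrix.transpose M) x)}
  zero_mem' := ⟨0, by funext s; cases s <;> simp [Matrix.mulVec_zero]⟩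
  add_mem' := by
    rintro a b ⟨x, rfl⟩ ⟨y, rfl⟩
    exact ⟨x + y, by funext s; cases s <;> simp [Matrix.mulVec_add]⟩
  smul_mem' := by
    rintro c a ⟨x, rfl⟩
    exact ⟨c • x, by funext s; cases s <;> simp [Matrix.mulVec_smul]⟩


section Aux

variable {K : Type*} [Field K] {n : ℕ}

/-- The natural equivalence `Fin n ≃ ZMod n` for `n ≠ 0`. -/
def finEquivZMod (n : ℕ) [NeZero n] : Fin n ≃ ZMod n where
  toFun i := ((i : ℕ) : ZMod n)
  invFun z := ⟨z.val, ZMod.val_lt z⟩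
  left_inv i := by
    ext
    simp [ZMod.val_natCast, Nat.mod_eq_of_lt i.isLt]
  right_inv z := ZMod.natCast_rightInverse z

lemma sum_fin_zmod [NeZero n] (f : ZMod n → K) :
    ∑ i : Fin n, f ((i : ℕ) : ZMod n) = ∑ z : ZMod n, f z :=
  Fintype.sum_equiv (finEquivZMod n) _ _ (fun _ => rfl)

lemma circulant_mul_comm' [NeZero n] {A B : Matrix (Fin n) (Fin n) K}
    (hA : IsCirculant A) (hB : IsCirculant B) : A * B = B * A := by
  obtain ⟨a, ha⟩ := hA
  obtain ⟨b, hb⟩ := hB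
  ext i j
  simp only [Matrix.mul_apply, ha, hb]
  rw [sum_fin_zmod (fun z => a (z - _) * b (_ - z)),
      sum_fin_zmod (fun z => b (z - _) * a (_ - z))]
  refine Fintype.sum_equiv (Equiv.subLeft (((i:ℕ):ZMod n) + ((j:ℕ):ZMod n))) _ _ (fun z => ?_)
  simp only [Equiv.subLeft_apply]
  set zi := ((i:ℕ):ZMod n)
  set zj := ((j:ℕ):ZMod n)
  have h1 : zi + zj - z - zi = zj - z := by ring
  have h2 : zj - (zi + zj - z) = z - zi := by ring
  rw [h1, h2, mul_comm]

lemma transpose_circulant' {A : Matrix (Fin n) (Fin n) K}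
    (hA : IsCirculant A) : IsCirculant Aᵀ := by
  obtain ⟨a, ha⟩ := hA
  exact ⟨fun z => a (-z), fun i j => by simp [Matrix.transpose_apply, ha, neg_sub]⟩

lemma revCirculant_symm {C : Matrix (Fin n) (Fin n) K}
    (hC : IsRevCirculant C) : Cᵀ = C := by
  obtain ⟨c, hc⟩ := hC
  ext i j
  simp [Matrix.transpose_apply, hc, add_comm]

lemma circulant_mul_revCirculant [NeZero n] {B C : Matrix (Fin n) (Fin n) K}
    (hB : IsCirculant B) (hC : IsRevCirculant C) : B * C = C * Bᵀ := by
  obtain ⟨b, hb⟩ := hB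
  obtain ⟨c, hc⟩ := hC
  ext i j
  simp only [Matrix.mul_apply, Matrix.transpose_apply, hb, hc]
  rw [sum_fin_zmod (fun z => b (z - _) * c (z + _)),
      sum_fin_zmod (fun z => c (_ + z) * b (z - _))]
  refine Fintype.sum_equiv (Equiv.addRight (((j:ℕ):ZMod n) - ((i:ℕ):ZMod n))) _ _ (fun z => ?_)
  simp only [Equiv.coe_addRight]
  set zi := ((i:ℕ):ZMod n)
  set zj := ((j:ℕ):ZMod n)
  set zi := ((i:ℕ):ZMod n)
  set zj := ((j:ℕ):ZMod n)
  have h1 : zi + (z + (zj - zi)) = z + zj := by ring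
  have h2 : z + (zj - zi) - zj = z - zi := by ring
  rw [h1, h2, mul_comm]

end Aux

lemma charTwo_mat_add_self {K : Type*} [Field K] [CharP K 2] {m : Type*} [Fintype m]
    (X : Matrix m m K) : X + X = 0 := by
  ext i j
  exact CharTwo.add_self_eq_zero _

lemma genCode_eq_dualCode {K : Type*} [Field K] [CharP K 2] {ι : Type*} [Fintype ι]
    [DecidableEq ι] (M : Matrix ι ι K) (h : M * Mᵀ = 1) :
    genCode M = dualCode (genCode M) := by
  have h' : Mᵀ * M = 1 := mul_eq_one_comm.mp h
  apply le_antisymm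
  · rintro v ⟨x, rfl⟩ y ⟨u, rfl⟩
    show ∑ s : ι ⊕ ι, _ * _ = 0
    rw [Fintype.sum_sum_type]
    simp only [Sum.elim_inl, Sum.elim_inr]
    have key : (Mᵀ *ᵥ x) ⬝ᵥ (Mᵀ *ᵥ u) = x ⬝ᵥ u := by
      rw [Matrix.mulVec_transpose, Matrix.dotProduct_mulVec, Matrix.vecMul_vecMul, h,
        Matrix.vecMul_one]
    show x ⬝ᵥ u + (Mᵀ *ᵥ x) ⬝ᵥ (Mᵀ *ᵥ u) = 0
    rw [key]
    exact CharTwo.add_self_eq_zero _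
  · intro w hw
    have hx : ∀ x : ι → K, ((w ∘ Sum.inl) + M *ᵥ (w ∘ Sum.inr)) ⬝ᵥ x = 0 := by
      intro x
      have h0 := hw (Sum.elim x (Mᵀ *ᵥ x)) ⟨x, rfl⟩
      rw [Fintype.sum_sum_type] at h0
      simp only [Sum.elim_inl, Sum.elim_inr] at h0
      have h1 : (w ∘ Sum.inr) ⬝ᵥ (Mᵀ *ᵥ x) = (M *ᵥ (w ∘ Sum.inr)) ⬝ᵥ x := by
        rw [Matrix.dotProduct_mulVec, Matrix.vecMul_transpose]
      rw [add_dotProduct, ← h1]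
      exact h0
    have hz : (w ∘ Sum.inl) + M *ᵥ (w ∘ Sum.inr) = 0 := by
      funext i
      have := hx (Pi.single i 1)
      rwa [dotProduct_single, mul_one] at this
    have hu : w ∘ Sum.inl = M *ᵥ (w ∘ Sum.inr) := by
      funext i
      have hi := congrFun hz i
      have := eq_neg_of_add_eq_zero_left hi
      rwa [CharTwo.neg_eq] at this
    refine ⟨w ∘ Sum.inl, ?_⟩
    funext s
    cases s with
    | inl i => rfl
    | inr i =>
      show w (Sum.inr i) = (Mᵀ *ᵥ (w ∘ Sum.inl)) i
      rw [hu, Matrix.mulVec_mulVec, h', Matrix.one_mulVec]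
      rfl

/-- the generalized four circulant construction yields a self-dual code
over a field of characteristic 2. -/
theorem genFourCirculant_selfDual {K : Type*} [Field K] [CharP K 2] {n : ℕ}
    (A B C : Matrix (Fin n) (Fin n) K)
    (hA : IsCirculant A) (hB : IsCirculant B) (hC : IsRevCirculant C)
    (h1 : A * Aᵀ + B * Bᵀ + C ^ 2 = 1) (h2 : A * C = C * A) :
    genCode (Matrix.fromBlocks A (B + C) (Bᵀ + C) Aᵀ) =
      dualCode (genCode (Matrix.fromBlocks A (B + C) (Bᵀ + C) Aᵀ)) := by
  have hMM : (Matrix.fromBlocks A (B + C) (Bᵀ + C) Aᵀ) *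
      (Matrix.fromBlocks A (B + C) (Bᵀ + C) Aᵀ)ᵀ = 1 := by
    cases n with
    | zero =>
      ext i j
      exact Sum.elim (fun a => a.elim0) (fun a => a.elim0) i
    | succ m =>
      haveI : NeZero (m + 1) := ⟨m.succ_ne_zero⟩
      have hCt : Cᵀ = C := revCirculant_symm hC
      have hAt : IsCirculant Aᵀ := transpose_circulant' hA
      have hBt : IsCirculant Bᵀ := transpose_circulant' hB
      have hAB : A * B = B * A := circulant_mul_comm' hA hB
      have hAAt : A * Aᵀ = Aᵀ * A := circulant_mul_comm' hA hAt
      have hBBt : B * Bᵀ = Bᵀ * B := circulant_mul_comm' hB hBt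
      have hAtBt : Aᵀ * Bᵀ = Bᵀ * Aᵀ := circulant_mul_comm' hAt hBt
      have hBC : B * C = C * Bᵀ := circulant_mul_revCirculant hB hC
      have hBtC : Bᵀ * C = C * B := by
        have := circulant_mul_revCirculant hBt hC
        rwa [Matrix.transpose_transpose] at this
      have hACt : C * Aᵀ = Aᵀ * C := by
        have := congrArg Matrix.transpose h2
        rwa [Matrix.transpose_mul, Matrix.transpose_mul, hCt] at this
      rw [Matrix.fromBlocks_transpose, Matrix.transpose_add, Matrix.transpose_add,
        Matrix.transpose_transpose, hCt, Matrix.fromBlocks_multiply]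
      have e11 : A * Aᵀ + (B + C) * (Bᵀ + C) = 1 := by
        have expand : A * Aᵀ + ((B + C) * (Bᵀ + C)) =
            (A * Aᵀ + B * Bᵀ + C ^ 2) + (B * C + C * Bᵀ) := by noncomm_ring
        rw [expand, hBC, charTwo_mat_add_self, add_zero, h1]
      have e12 : A * (B + C) + (B + C) * Aᵀᵀ = 0 := by
        rw [Matrix.transpose_transpose]
        have expand : A * (B + C) + ((B + C) * A) =
            (A * B + B * A) + (A * C + C * A) := by noncomm_ring
        rw [expand, hAB, h2, charTwo_mat_add_self, charTwo_mat_add_self, add_zero]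
      have e21 : (Bᵀ + C) * Aᵀ + Aᵀ * (Bᵀ + C) = 0 := by
        have expand : (Bᵀ + C) * Aᵀ + (Aᵀ * (Bᵀ + C)) =
            (Bᵀ * Aᵀ + Aᵀ * Bᵀ) + (C * Aᵀ + Aᵀ * C) := by noncomm_ring
        rw [expand, ← hAtBt, hACt, charTwo_mat_add_self, charTwo_mat_add_self, add_zero]
      have e22 : (Bᵀ + C) * (B + C) + Aᵀ * Aᵀᵀ = 1 := by
        rw [Matrix.transpose_transpose]
        have expand : (Bᵀ + C) * (B + C) + (Aᵀ * A) =
            (Aᵀ * A + Bᵀ * B + C ^ 2) + (Bᵀ * C + C * B) := by noncomm_ring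
        rw [expand, hBtC, charTwo_mat_add_self, add_zero, ← hAAt, ← hBBt, h1]
      rw [e11, e12, e21, e22, ← Matrix.fromBlocks_one]
  exact genCode_eq_dualCode _ hMM
end

section
/- Let K be a field of characteristic 2, let A be a symmetric n×n circulant matrix over K (Aᵀ = A), let B be an n×n circulant matrix over K, and let C be an n×n reverse-circulant matrix over K. Assume that A² + B·Bᵀ + C² = I_n. Then the linear code generated by the block matrix (I_{2n} | M) with M = [[A, B + C], [Bᵀ + C, A]], i.e. the subspace {(x, Mᵀx) : x ∈ K^{2n}} of K^{4n}, is self-dual. -/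
open Matrix

section Aux

open Matrix

variable {K : Type*}

lemma sum_zmod_arg [AddCommMonoid K] {n : ℕ} [NeZero n] (f : ZMod n → K) :
    ∑ k : Fin n, f (((k : ℕ) : ZMod n)) = ∑ z : ZMod n, f z := by
  apply Fintype.sum_bijective (fun k : Fin n => ((k : ℕ) : ZMod n)) _ _ _ (fun _ => rfl)
  rw [Fintype.bijective_iff_injective_and_card]
  refine ⟨fun a b hab => ?_, by simp [ZMod.card]⟩
  have := congrArg ZMod.val hab
  rw [ZMod.val_natCast_of_lt a.isLt, ZMod.val_natCast_of_lt b.isLt] at this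
  exact Fin.ext this

lemma circ_mul_comm [CommRing K] {n : ℕ} {A B : Matrix (Fin n) (Fin n) K}
    (hA : IsCirculant A) (hB : IsCirculant B) : A * B = B * A := by
  obtain ⟨a, ha⟩ := hA; obtain ⟨b, hb⟩ := hB
  match n with
  | 0 => ext i; exact i.elim0
  | Nat.succ m =>
    ext i j
    simp only [Matrix.mul_apply, ha, hb]
    set ci : ZMod (m + 1) := ((i : ℕ) : ZMod (m + 1))
    set cj : ZMod (m + 1) := ((j : ℕ) : ZMod (m + 1))
    rw [sum_zmod_arg (fun z => a (z - ci) * b (cj - z)),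
      sum_zmod_arg (fun z => b (z - ci) * a (cj - z))]
    refine Fintype.sum_equiv (Equiv.subLeft (ci + cj)) _ _ fun z => ?_
    simp only [Equiv.subLeft_apply]
    rw [show ci + cj - z - ci = cj - z by ring, show cj - (ci + cj - z) = z - ci by ring,
      mul_comm]

lemma circ_mul_rev [CommRing K] {n : ℕ} {A C : Matrix (Fin n) (Fin n) K}
    (hA : IsCirculant A) (hC : IsRevCirculant C) : A * C = C * Aᵀ := by
  obtain ⟨a, ha⟩ := hA; obtain ⟨c, hc⟩ := hC
  match n with
  | 0 => ext i; exact i.elim0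
  | Nat.succ m =>
    ext i j
    simp only [Matrix.mul_apply, Matrix.transpose_apply, ha, hc]
    set ci : ZMod (m + 1) := ((i : ℕ) : ZMod (m + 1))
    set cj : ZMod (m + 1) := ((j : ℕ) : ZMod (m + 1))
    rw [sum_zmod_arg (fun z => a (z - ci) * c (z + cj)),
      sum_zmod_arg (fun z => c (ci + z) * a (z - cj))]
    refine Fintype.sum_equiv (Equiv.addRight (cj - ci)) _ _ fun z => ?_
    simp only [Equiv.coe_addRight]
    rw [show ci + (z + (cj - ci)) = z + cj by ring, show z + (cj - ci) - cj = z - ci by ring,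
      mul_comm]

lemma rev_transpose [CommRing K] {n : ℕ} {C : Matrix (Fin n) (Fin n) K}
    (hC : IsRevCirculant C) : Cᵀ = C := by
  obtain ⟨c, hc⟩ := hC
  ext i j
  rw [Matrix.transpose_apply, hc, hc, add_comm]

lemma circ_transpose [CommRing K] {n : ℕ} {B : Matrix (Fin n) (Fin n) K}
    (hB : IsCirculant B) : IsCirculant Bᵀ := by
  obtain ⟨b, hb⟩ := hB
  refine ⟨fun z => b (-z), fun i j => ?_⟩
  show B j i = b (-(((j : ℕ) : ZMod n) - ((i : ℕ) : ZMod n)))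
  rw [hb, neg_sub]

lemma mem_genCode [CommRing K] {ι : Type*} [Fintype ι] (M : Matrix ι ι K) (v : ι ⊕ ι → K) :
    v ∈ genCode M ↔ ∃ x : ι → K, v = Sum.elim x (Mᵀ *ᵥ x) := Iff.rfl

lemma mem_dualCode [CommRing K] {ι : Type*} [Fintype ι] (C : Submodule K (ι → K)) (x : ι → K) :
    x ∈ dualCode C ↔ ∀ y ∈ C, ∑ i, x i * y i = 0 := Iff.rfl

lemma genCode_selfDual [Field K] [CharP K 2] {ι : Type*} [Fintype ι] [DecidableEq ι]
    (M : Matrix ι ι K) (h : M * Mᵀ = 1) : genCode M = dualCode (genCode M) := by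
  ext v
  rw [mem_genCode, mem_dualCode]
  constructor
  · rintro ⟨x, rfl⟩ w ⟨u, rfl⟩
    rw [Fintype.sum_sum_type]
    simp only [Sum.elim_inl, Sum.elim_inr]
    have h2 : ∑ i, (Mᵀ *ᵥ x) i * (Mᵀ *ᵥ u) i = ∑ i, x i * u i := by
      show (Mᵀ *ᵥ x) ⬝ᵥ (Mᵀ *ᵥ u) = x ⬝ᵥ u
      rw [Matrix.mulVec_transpose, Matrix.dotProduct_mulVec, Matrix.vecMul_vecMul, h,
        Matrix.vecMul_one]
    rw [h2, CharTwo.add_self_eq_zero]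
  · intro hv
    set x : ι → K := fun i => v (Sum.inl i) with hxdef
    set y : ι → K := fun i => v (Sum.inr i) with hydef
    have key : ∀ u : ι → K, (x + M *ᵥ y) ⬝ᵥ u = 0 := by
      intro u
      have hu := hv (Sum.elim u (Mᵀ *ᵥ u)) ⟨u, rfl⟩
      rw [Fintype.sum_sum_type] at hu
      simp only [Sum.elim_inl, Sum.elim_inr] at hu
      have h3 : ∑ i, v (Sum.inr i) * (Mᵀ *ᵥ u) i = (M *ᵥ y) ⬝ᵥ u := by
        show y ⬝ᵥ (Mᵀ *ᵥ u) = _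
        rw [Matrix.dotProduct_mulVec, Matrix.vecMul_transpose]
      rw [h3] at hu
      rw [add_dotProduct]
      exact hu
    have hx : M *ᵥ y = x := by
      funext i
      have := key (Pi.single i 1)
      rw [dotProduct_single, mul_one, Pi.add_apply] at this
      have h4 := add_eq_zero_iff_eq_neg.mp this
      rw [CharTwo.neg_eq] at h4
      exact h4.symm
    have hy : Mᵀ *ᵥ x = y := by
      rw [← hx, Matrix.mulVec_mulVec, mul_eq_one_comm.mp h, Matrix.one_mulVec]
    refine ⟨x, funext fun s => ?_⟩
    cases s with
    | inl i => rfl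
    | inr i => rw [Sum.elim_inr, hy]

end Aux

/-- the generalized four circulant construction with `A` a symmetric
circulant matrix yields a self-dual code over a field of characteristic 2. -/
theorem genFourCirculant_symm_selfDual {K : Type*} [Field K] [CharP K 2] {n : ℕ}
    (A B C : Matrix (Fin n) (Fin n) K)
    (hA : IsCirculant A) (hAsymm : Aᵀ = A) (hB : IsCirculant B) (hC : IsRevCirculant C)
    (h1 : A ^ 2 + B * Bᵀ + C ^ 2 = 1) :
    genCode (Matrix.fromBlocks A (B + C) (Bᵀ + C) A) =
      dualCode (genCode (Matrix.fromBlocks A (B + C) (Bᵀ + C) A)) := by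
  set M := Matrix.fromBlocks A (B + C) (Bᵀ + C) A with hMdef
  have hCt : Cᵀ = C := rev_transpose hC
  have hBt : IsCirculant Bᵀ := circ_transpose hB
  have hBC : B * C = C * Bᵀ := circ_mul_rev hB hC
  have hAC : A * C = C * A := by rw [circ_mul_rev hA hC, hAsymm]
  have hBtC : Bᵀ * C = C * B := by rw [circ_mul_rev hBt hC, Matrix.transpose_transpose]
  have hAB : A * B = B * A := circ_mul_comm hA hB
  have hABt : A * Bᵀ = Bᵀ * A := circ_mul_comm hA hBt
  have hBtB : Bᵀ * B = B * Bᵀ := circ_mul_comm hBt hB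
  have h2 : ∀ X : Matrix (Fin n) (Fin n) K, X + X = 0 := fun X => by
    rw [← two_smul K X, CharTwo.two_eq_zero, zero_smul]
  have hM2 : M * M = 1 := by
    have tl : A * A + (B + C) * (Bᵀ + C) = 1 := by
      calc A * A + (B + C) * (Bᵀ + C)
          = (A ^ 2 + B * Bᵀ + C ^ 2) + (B * C + C * Bᵀ) := by noncomm_ring
        _ = 1 + (C * Bᵀ + C * Bᵀ) := by rw [h1, hBC]
        _ = 1 := by rw [h2, add_zero]
    have tr : A * (B + C) + (B + C) * A = 0 := by
      calc A * (B + C) + (B + C) * A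
          = (A * B + B * A) + (A * C + C * A) := by noncomm_ring
        _ = 0 := by rw [hAB, hAC, h2, h2, add_zero]
    have bl : (Bᵀ + C) * A + A * (Bᵀ + C) = 0 := by
      calc (Bᵀ + C) * A + A * (Bᵀ + C)
          = (A * Bᵀ + Bᵀ * A) + (A * C + C * A) := by noncomm_ring
        _ = 0 := by rw [hABt, hAC, h2, h2, add_zero]
    have br : (Bᵀ + C) * (B + C) + A * A = 1 := by
      calc (Bᵀ + C) * (B + C) + A * A
          = (A ^ 2 + Bᵀ * B + C ^ 2) + (Bᵀ * C + C * B) := by noncomm_ring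
        _ = 1 + (C * B + C * B) := by rw [hBtB, h1, hBtC]
        _ = 1 := by rw [h2, add_zero]
    rw [hMdef, Matrix.fromBlocks_multiply, ← Matrix.fromBlocks_one, tl, tr, bl, br]
  have hMt : Mᵀ = M := by
    rw [hMdef, Matrix.fromBlocks_transpose, Matrix.transpose_add, Matrix.transpose_add,
      Matrix.transpose_transpose, hCt, hAsymm]
  exact genCode_selfDual M (by rw [hMt]; exact hM2)
end
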